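/- arXiv:2201.05637 — 6 statements merged into one kernel-verified Lean document; each statement's English description precedes it below -/
import Mathlib

section
/- If G = H × K is a direct product of finite groups with gcd(|H|,|K|) = 1, then η(G) = η(H)·η(K). -/
/-- A subgroup is maximal cyclic if it is cyclic and not properly contained
in any cyclic subgroup. -/
def IsMaximalCyclic {G : Type*} [Group G] (C : Subgroup G) : Prop :=
  IsCyclic C ∧ ∀ D : Subgroup G, IsCyclic D → C ≤ D → C = D

/-- η(G): the number of conjugacy classes of maximal cyclic subgroups of `G`. -/
noncomputable def eta (G : Type*) [Group G] : ℕ :=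
  Nat.card (Quot (fun C D : {C : Subgroup G // IsMaximalCyclic C} =>
    ∃ g : G, D.1 = C.1.map (MulAut.conj g).toMonoidHom))

/-- The set of elements generating a non-maximal cyclic subgroup. -/
def Gminus (G : Type*) [Group G] : Set G :=
  {g : G | ¬ IsMaximalCyclic (Subgroup.zpowers g)}

/-- `C` is a maximal cyclic subgroup of `N` (all inside an ambient group). -/
def IsMaximalCyclicIn {G : Type*} [Group G] (N C : Subgroup G) : Prop :=
  C ≤ N ∧ IsCyclic C ∧ ∀ D : Subgroup G, D ≤ N → IsCyclic D → C ≤ D → C = D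

/-!
When `|H|` and `|K|` are coprime, every subgroup `C` of `H × K` is the product of its two
projections: for `(h, k) ∈ C`, the power `(h, k) ^ |K| = (h ^ |K|, 1)` lies in `C`, and `h` is a
power of `h ^ |K|` because `|K|` is prime to the order of `h`. Moreover `A × B` is cyclic iff
`A` and `B` are (their orders are coprime). So `(A, B) ↦ A × B` is a bijection from pairs of
maximal cyclic subgroups onto the maximal cyclic subgroups of `H × K`, and since conjugation by
`(h, k)` acts componentwise, it induces a bijection on conjugacy classes.
-/

open Subgroup

namespace Subgroup

variable {H K : Type*} [Group H] [Group K]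

@[simp]
lemma map_fst_prod (A : Subgroup H) (B : Subgroup K) : (A.prod B).map (MonoidHom.fst H K) = A := by
  ext x
  simpa [mem_prod] using fun _ => ⟨1, B.one_mem⟩

@[simp]
lemma map_snd_prod (A : Subgroup H) (B : Subgroup K) : (A.prod B).map (MonoidHom.snd H K) = B := by
  ext x
  simpa [mem_prod] using fun _ => ⟨1, A.one_mem⟩

lemma prod_eq_prod_iff {A A' : Subgroup H} {B B' : Subgroup K} :
    A.prod B = A'.prod B' ↔ A = A' ∧ B = B' := by
  refine ⟨fun h => ⟨?_, ?_⟩, fun ⟨hA, hB⟩ => hA ▸ hB ▸ rfl⟩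
  · simpa using congrArg (map (MonoidHom.fst H K)) h
  · simpa using congrArg (map (MonoidHom.snd H K)) h

lemma map_conj_one {G : Type*} [Group G] (C : Subgroup G) :
    C.map (MulAut.conj (1 : G)).toMonoidHom = C := by
  ext
  simp

lemma map_conj_map_conj {G : Type*} [Group G] (C : Subgroup G) (g g' : G) :
    (C.map (MulAut.conj g).toMonoidHom).map (MulAut.conj g').toMonoidHom =
      C.map (MulAut.conj (g' * g)).toMonoidHom := by
  rw [map_map, map_mul]
  rfl

lemma map_conj_prod (g : H × K) (A : Subgroup H) (B : Subgroup K) :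
    (A.prod B).map (MulAut.conj g).toMonoidHom =
      (A.map (MulAut.conj g.1).toMonoidHom).prod (B.map (MulAut.conj g.2).toMonoidHom) := by
  simp only [map_equiv_eq_comap_symm', ← MonoidHom.prodMap_comap_prod]
  rfl

lemma isCyclic_prod_iff_of_coprime (hcop : (Nat.card H).Coprime (Nat.card K))
    {A : Subgroup H} {B : Subgroup K} :
    IsCyclic (A.prod B) ↔ IsCyclic A ∧ IsCyclic B := by
  have hAB : (Nat.card A).Coprime (Nat.card B) :=
    (hcop.coprime_dvd_left (card_subgroup_dvd_card A)).coprime_dvd_right (card_subgroup_dvd_card B)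
  rw [(prodEquiv A B).isCyclic, Group.isCyclic_prod_iff]
  exact ⟨fun h => ⟨h.1, h.2.1⟩, fun h => ⟨h.1, h.2, hAB⟩⟩

section Coprime

variable (hcop : (Nat.card H).Coprime (Nat.card K))
include hcop

lemma mk_fst_one_mem_zpowers_of_coprime (g : H × K) : (g.1, (1 : K)) ∈ zpowers g := by
  have hpow : g ^ Nat.card K = MonoidHom.inl H K (g.1 ^ Nat.card K) :=
    Prod.ext rfl pow_card_eq_one'
  have hgen : g.1 ∈ zpowers (g.1 ^ Nat.card K) :=
    mem_zpowers_pow_iff.2 (hcop.coprime_dvd_left (_root_.orderOf_dvd_natCard g.1)).symm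
  refine zpowers_le.2 (pow_mem (mem_zpowers g) (Nat.card K)) ?_
  rw [hpow, ← MonoidHom.map_zpowers]
  exact mem_map_of_mem _ hgen

lemma mk_one_snd_mem_zpowers_of_coprime (g : H × K) : ((1 : H), g.2) ∈ zpowers g := by
  have hsplit : ((1 : H), g.2) = (g.1, (1 : K))⁻¹ * g := Prod.ext (by simp) (by simp)
  rw [hsplit]
  exact mul_mem (inv_mem (mk_fst_one_mem_zpowers_of_coprime hcop g)) (mem_zpowers g)

lemma prod_map_fst_map_snd_of_coprime (C : Subgroup (H × K)) :
    (C.map (MonoidHom.fst H K)).prod (C.map (MonoidHom.snd H K)) = C := by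
  refine le_antisymm ?_ (le_prod_iff.2 ⟨le_rfl, le_rfl⟩)
  rintro _ ⟨⟨g, hg, hx⟩, ⟨g', hg', hy⟩⟩
  have hsplit : ((g.1, (1 : K)) * ((1 : H), g'.2) : H × K) = _ :=
    Prod.ext (by simpa using hx) (by simpa using hy)
  rw [← hsplit]
  exact mul_mem (zpowers_le.2 hg (mk_fst_one_mem_zpowers_of_coprime hcop g))
    (zpowers_le.2 hg' (mk_one_snd_mem_zpowers_of_coprime hcop g'))

def prodEquivOfCoprime : Subgroup H × Subgroup K ≃ Subgroup (H × K) where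
  toFun p := p.1.prod p.2
  invFun C := (C.map (MonoidHom.fst H K), C.map (MonoidHom.snd H K))
  left_inv p := Prod.ext (map_fst_prod p.1 p.2) (map_snd_prod p.1 p.2)
  right_inv := prod_map_fst_map_snd_of_coprime hcop

end Coprime

end Subgroup

def maxCyclicConjSetoid (G : Type*) [Group G] :
    Setoid {C : Subgroup G // IsMaximalCyclic C} where
  r C D := ∃ g : G, D.1 = C.1.map (MulAut.conj g).toMonoidHom
  iseqv :=
    { refl := fun C => ⟨1, (map_conj_one C.1).symm⟩
      symm := fun ⟨g, hg⟩ =>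
        ⟨g⁻¹, by rw [hg, map_conj_map_conj, inv_mul_cancel, map_conj_one]⟩
      trans := fun ⟨g, hg⟩ ⟨g', hg'⟩ => ⟨g' * g, by rw [hg', hg, map_conj_map_conj]⟩ }

lemma eta_eq_card_quotient (G : Type*) [Group G] :
    eta G = Nat.card (Quotient (maxCyclicConjSetoid G)) :=
  rfl

section Coprime

variable {H K : Type*} [Group H] [Group K] (hcop : (Nat.card H).Coprime (Nat.card K))
include hcop

lemma isMaximalCyclic_prod_iff_of_coprime {A : Subgroup H} {B : Subgroup K} :
    IsMaximalCyclic (A.prod B) ↔ IsMaximalCyclic A ∧ IsMaximalCyclic B := by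
  simp only [IsMaximalCyclic, isCyclic_prod_iff_of_coprime hcop]
  constructor
  · rintro ⟨⟨hA, hB⟩, hmax⟩
    refine ⟨⟨hA, fun D hD hle => ?_⟩, ⟨hB, fun D hD hle => ?_⟩⟩
    · exact (prod_eq_prod_iff.1 <| hmax (D.prod B)
        ((isCyclic_prod_iff_of_coprime hcop).2 ⟨hD, hB⟩) (prod_mono hle le_rfl)).1
    · exact (prod_eq_prod_iff.1 <| hmax (A.prod D)
        ((isCyclic_prod_iff_of_coprime hcop).2 ⟨hA, hD⟩) (prod_mono le_rfl hle)).2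
  · rintro ⟨⟨hA, hAmax⟩, ⟨hB, hBmax⟩⟩
    refine ⟨⟨hA, hB⟩, fun E hE hle => ?_⟩
    rw [← prod_map_fst_map_snd_of_coprime hcop E] at hE hle ⊢
    obtain ⟨hE₁, hE₂⟩ := (isCyclic_prod_iff_of_coprime hcop).1 hE
    obtain ⟨hle₁, hle₂⟩ := le_prod_iff.1 hle
    simp only [map_fst_prod, map_snd_prod] at hle₁ hle₂
    rw [hAmax _ hE₁ hle₁, hBmax _ hE₂ hle₂]

def maxCyclicProdEquiv :
    {A : Subgroup H // IsMaximalCyclic A} × {B : Subgroup K // IsMaximalCyclic B} ≃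
      {C : Subgroup (H × K) // IsMaximalCyclic C} :=
  Equiv.subtypeProdEquivProd.symm.trans <|
    (prodEquivOfCoprime hcop).subtypeEquiv fun _ =>
      (isMaximalCyclic_prod_iff_of_coprime hcop).symm

@[simp]
lemma coe_maxCyclicProdEquiv_apply
    (p : {A : Subgroup H // IsMaximalCyclic A} × {B : Subgroup K // IsMaximalCyclic B}) :
    (maxCyclicProdEquiv hcop p : Subgroup (H × K)) = p.1.1.prod p.2.1 :=
  rfl

def maxCyclicConjClassesProdEquiv :
    Quotient (maxCyclicConjSetoid H) × Quotient (maxCyclicConjSetoid K) ≃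
      Quotient (maxCyclicConjSetoid (H × K)) :=
  (Setoid.prodQuotientEquiv _ _).trans <| Quotient.congr (maxCyclicProdEquiv hcop) <| by
    rintro ⟨A, B⟩ ⟨A', B'⟩
    show (∃ h, _) ∧ (∃ k, _) ↔ ∃ g : H × K, _
    simp only [coe_maxCyclicProdEquiv_apply, map_conj_prod, prod_eq_prod_iff, Prod.exists,
      exists_and_left, exists_and_right]

end Coprime

theorem stmt_3_general {H K : Type*} [Group H] [Group K]
    (hcop : Nat.Coprime (Nat.card H) (Nat.card K)) :
    eta (H × K) = eta H * eta K := by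
  rw [eta_eq_card_quotient, eta_eq_card_quotient, eta_eq_card_quotient, ← Nat.card_prod]
  exact Nat.card_congr (maxCyclicConjClassesProdEquiv hcop).symm

theorem stmt_3 {H K : Type*} [Group H] [Group K] [Finite H] [Finite K]
    (hcop : Nat.Coprime (Nat.card H) (Nat.card K)) :
    eta (H × K) = eta H * eta K :=
  stmt_3_general hcop
end

section
/- Let G = H × K where H is a nontrivial finite p-group and p divides |K|. If k ∈ K generates a maximal cyclic subgroup of K whose order is divisible by p, then ⟨(1,k)⟩ is a maximal cyclic subgroup of G. -/
open Subgroup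

theorem isMaximalCyclic_zpowers_iff {G : Type*} [Group G] {a : G} :
    IsMaximalCyclic (zpowers a) ↔ ∀ g : G, a ∈ zpowers g → g ∈ zpowers a := by
  refine ⟨fun ha g hag ↦ ?_, fun ha ↦ ⟨inferInstance, fun D hD haD ↦ ?_⟩⟩
  · rw [ha.2 _ inferInstance (zpowers_le.mpr hag)]
    exact mem_zpowers g
  · obtain ⟨g, rfl⟩ := D.isCyclic_iff_exists_zpowers_eq_top.mp hD
    exact le_antisymm haD (zpowers_le.mpr (ha g (haD (mem_zpowers a))))

theorem coprime_orderOf_of_mem_zpowers_pow {G : Type*} [Group G] [Finite G] {x : G} {n : ℕ}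
    (hx : x ∈ zpowers (x ^ n)) : (orderOf x).Coprime n := by
  have hpos := orderOf_pos x
  have hdvd : orderOf x ∣ orderOf x / (orderOf x).gcd n := by
    simpa only [orderOf_pow] using orderOf_dvd_of_mem_zpowers hx
  have hquot_pos : 0 < orderOf x / (orderOf x).gcd n :=
    Nat.div_pos (Nat.gcd_le_left n hpos) (Nat.gcd_pos_of_pos_left n hpos)
  exact (Nat.div_eq_self.mp (le_antisymm (Nat.div_le_self _ _) (Nat.le_of_dvd hquot_pos hdvd)))
    |>.resolve_left hpos.ne'

theorem IsPGroup.eq_one_of_pow_eq_one {p : ℕ} {G : Type*} [Group G] (hG : IsPGroup p G)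
    {n : ℕ} (hn : p.Coprime n) {g : G} (hg : g ^ n = 1) : g = 1 :=
  (hG.powEquiv hn).injective (by rw [powEquiv_apply, powEquiv_apply, hg, one_pow])

theorem stmt_4_general {H K : Type*} [Group H] [Group K] [Finite H] [Finite K]
    {p : ℕ} (hH : IsPGroup p H) (k : K)
    (hk : IsMaximalCyclic (Subgroup.zpowers k)) (hpk : p ∣ orderOf k) :
    IsMaximalCyclic (Subgroup.zpowers ((1, k) : H × K)) := by
  rw [isMaximalCyclic_zpowers_iff] at hk ⊢
  rintro ⟨h, x⟩ hg
  obtain ⟨n, hn⟩ := mem_powers_iff_mem_zpowers.mpr hg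
  obtain ⟨hhn, hxn⟩ : h ^ n = 1 ∧ x ^ n = k := by simpa only [Prod.pow_mk, Prod.mk.injEq] using hn
  have hxk : x ∈ zpowers k := hk x ⟨n, by simpa using hxn⟩
  have hcop : (orderOf x).Coprime n :=
    coprime_orderOf_of_mem_zpowers_pow (hxn ▸ hxk)
  have hpn : p.Coprime n := hcop.coprime_dvd_left (hpk.trans (hxn ▸ orderOf_pow_dvd n))
  obtain rfl : h = 1 := hH.eq_one_of_pow_eq_one hpn hhn
  rw [← MonoidHom.inr_apply, ← MonoidHom.map_zpowers]
  exact mem_map_of_mem _ hxk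

theorem stmt_4 {H K : Type*} [Group H] [Group K] [Finite H] [Finite K]
    {p : ℕ} (hp : p.Prime) (hH : IsPGroup p H) (hHnt : Nontrivial H)
    (hpK : p ∣ Nat.card K) (k : K)
    (hk : IsMaximalCyclic (Subgroup.zpowers k)) (hpk : p ∣ orderOf k) :
    IsMaximalCyclic (Subgroup.zpowers ((1, k) : H × K)) :=
  stmt_4_general hH k hk hpk
end

section
/- Let G = H × K where H is a nontrivial finite nilpotent group and some prime p divides both |H| and |K|. Then η(G) > η(K). -/
/-! Projection to `K` maps conjugacy classes of maximal cyclic subgroups of `H × K` onto those of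
`K`: a maximal cyclic subgroup of `H × K` containing a lift of a generator of a maximal cyclic
`⟨k⟩ ≤ K` projects onto `⟨k⟩`. The map is not injective. Choose `⟨k⟩` maximal cyclic with
`p ∣ o(k)`, `h ∈ H` of order `p`, and maximal cyclic `D₁ ∋ (1, k)`, `D₂ ∋ (h, k)`, both over
`⟨k⟩`. If `D₁ = ⟨w⟩` and `w ^ n = (1, k)`, then `w.2 ^ n = k` generates `⟨w.2⟩`, so `n` is prime
to `o(k)`; as `o(w.1) ∣ n`, the `H`-projection of `D₁` has order prime to `p`, while that of `D₂`
contains `h`. The order of the `H`-projection is a conjugacy invariant. -/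

open Subgroup

lemma Nat.card_lt_of_surjective_not_injective {α β : Type*} [Finite α] (f : α → β)
    (hf : Function.Surjective f) (hf' : ¬ Function.Injective f) : Nat.card β < Nat.card α := by
  have : Finite β := Finite.of_surjective f hf
  have := Fintype.ofFinite α
  have := Fintype.ofFinite β
  simpa only [Nat.card_eq_fintype_card] using Fintype.card_lt_of_surjective_not_injective f hf hf'

lemma Nat.Coprime.of_orderOf_pow_eq {G : Type*} [Group G] [Finite G] {y : G} {n : ℕ}
    (h : orderOf (y ^ n) = orderOf y) : (orderOf y).Coprime n := by
  rw [_root_.orderOf_pow y] at h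
  exact (Nat.div_eq_self.mp h).resolve_left (orderOf_pos y).ne'

section MaximalCyclic

variable {G G' : Type*} [Group G] [Group G']

lemma Subgroup.isCyclic_map (f : G →* G') {C : Subgroup G} (hC : IsCyclic C) :
    IsCyclic (C.map f) :=
  isCyclic_of_surjective (f.subgroupMap C) (f.subgroupMap_surjective C)

lemma Subgroup.map_map_conj (f : G →* G') (C : Subgroup G) (g : G) :
    (C.map (MulAut.conj g).toMonoidHom).map f =
      (C.map f).map (MulAut.conj (f g)).toMonoidHom := by
  rw [map_map, map_map]
  congr 1
  ext x
  simp

lemma Subgroup.map_conj_map_conj_s5 (C : Subgroup G) (g g' : G) :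
    (C.map (MulAut.conj g).toMonoidHom).map (MulAut.conj g').toMonoidHom =
      C.map (MulAut.conj (g' * g)).toMonoidHom := by
  rw [map_map]
  congr 1
  ext
  simp [mul_assoc]

lemma IsMaximalCyclic.map_mulEquiv {C : Subgroup G} (hC : IsMaximalCyclic C) (e : G ≃* G') :
    IsMaximalCyclic (C.map e.toMonoidHom) := by
  refine ⟨isCyclic_map _ hC.1, fun D hD hCD => ?_⟩
  have hcyc : IsCyclic (D.comap e.toMonoidHom) := by
    rw [show D.comap e.toMonoidHom = D.map e.symm.toMonoidHom from comap_equiv_eq_map_symm e D]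
    exact isCyclic_map _ hD
  rw [hC.2 _ hcyc (map_le_iff_le_comap.mp hCD)]
  exact map_comap_eq_self_of_surjective e.surjective D

lemma isMaximalCyclic_map_mulEquiv_iff {C : Subgroup G} (e : G ≃* G') :
    IsMaximalCyclic (C.map e.toMonoidHom) ↔ IsMaximalCyclic C := by
  refine ⟨fun h => ?_, fun h => h.map_mulEquiv e⟩
  have := h.map_mulEquiv e.symm
  rwa [map_map, show e.symm.toMonoidHom.comp e.toMonoidHom = MonoidHom.id G by ext; simp,
    map_id] at this

lemma exists_isMaximalCyclic_mem [Finite G] (x : G) :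
    ∃ D : Subgroup G, IsMaximalCyclic D ∧ x ∈ D := by
  obtain ⟨D, hxD, hD⟩ :=
    Finite.exists_le_maximal (p := fun D : Subgroup G => IsCyclic D) (isCyclic_zpowers x)
  exact ⟨D, ⟨hD.1, fun E hE hDE => le_antisymm hDE (hD.2 hE hDE)⟩, zpowers_le.mp hxD⟩

end MaximalCyclic

def IsConjMaxCyclic (G : Type*) [Group G] (C D : {C : Subgroup G // IsMaximalCyclic C}) : Prop :=
  ∃ g : G, D.1 = C.1.map (MulAut.conj g).toMonoidHom

abbrev MaxCyclicClasses (G : Type*) [Group G] := Quot (IsConjMaxCyclic G)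

namespace MaxCyclicClasses

variable {G G' : Type*} [Group G] [Group G']

lemma isConjMaxCyclic_equivalence : Equivalence (IsConjMaxCyclic G) where
  refl C := ⟨1, by ext; simp⟩
  symm := by
    rintro C D ⟨g, hg⟩
    exact ⟨g⁻¹, by rw [hg, map_conj_map_conj_s5, inv_mul_cancel]; ext; simp⟩
  trans := by
    rintro C D E ⟨g, hg⟩ ⟨g', hg'⟩
    exact ⟨g' * g, by rw [hg', hg, map_conj_map_conj_s5]⟩

lemma mk_eq_mk_iff {C D : {C : Subgroup G // IsMaximalCyclic C}} :
    Quot.mk (IsConjMaxCyclic G) C = Quot.mk _ D ↔ IsConjMaxCyclic G C D :=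
  ⟨fun h => isConjMaxCyclic_equivalence.eqvGen_iff.mp (Quot.eqvGen_exact h), Quot.sound⟩

instance [Finite G] : Nonempty (MaxCyclicClasses G) :=
  have ⟨C, hC, _⟩ := exists_isMaximalCyclic_mem (1 : G)
  ⟨Quot.mk _ ⟨C, hC⟩⟩

open Classical in
/-- The class of `f C`, when `f C` is again maximal cyclic; an arbitrary class otherwise. -/
noncomputable def image (f : G →* G') [Nonempty (MaxCyclicClasses G')] :
    MaxCyclicClasses G → MaxCyclicClasses G' :=
  Quot.lift
    (fun C => if h : IsMaximalCyclic (C.1.map f) then Quot.mk _ ⟨_, h⟩ else Classical.arbitrary _)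
    (by
      rintro C D ⟨g, hg⟩
      have hD : D.1.map f = (C.1.map f).map (MulAut.conj (f g)).toMonoidHom := by
        rw [hg, map_map_conj]
      simp only [hD, isMaximalCyclic_map_mulEquiv_iff]
      split_ifs
      · exact Quot.sound ⟨f g, rfl⟩
      · rfl)

variable [Nonempty (MaxCyclicClasses G')] (f : G →* G')

lemma image_mk {C : Subgroup G} (hC : IsMaximalCyclic C) (hfC : IsMaximalCyclic (C.map f)) :
    image f (Quot.mk _ ⟨C, hC⟩) = Quot.mk _ ⟨C.map f, hfC⟩ :=
  dif_pos hfC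

lemma image_surjective [Finite G] (hf : Function.Surjective f) :
    Function.Surjective (image f) := by
  rintro ⟨C, hC⟩
  obtain ⟨c, rfl⟩ := C.isCyclic_iff_exists_zpowers_eq_top.mp hC.1
  obtain ⟨x, rfl⟩ := hf c
  obtain ⟨D, hD, hxD⟩ := exists_isMaximalCyclic_mem x
  have hDC : zpowers (f x) = D.map f :=
    hC.2 _ (isCyclic_map f hD.1) (zpowers_le.mpr (mem_map_of_mem f hxD))
  exact ⟨Quot.mk _ ⟨D, hD⟩, by rw [image_mk f hD (hDC ▸ hC)]; congr 2; exact hDC.symm⟩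

end MaxCyclicClasses

open MaxCyclicClasses in
lemma eta_lt_of_surjective {G G' : Type*} [Group G] [Group G'] [Finite G] [Finite G']
    (f : G →* G') (hf : Function.Surjective f) {D₁ D₂ : Subgroup G}
    (hD₁ : IsMaximalCyclic D₁) (hD₂ : IsMaximalCyclic D₂)
    (hmap : IsMaximalCyclic (D₁.map f)) (hmap₁₂ : D₁.map f = D₂.map f)
    (hconj : ∀ g : G, D₂ ≠ D₁.map (MulAut.conj g).toMonoidHom) : eta G' < eta G := by
  refine Nat.card_lt_of_surjective_not_injective _ (image_surjective f hf) fun hinj => ?_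
  have heq : image f (Quot.mk _ ⟨D₁, hD₁⟩) = image f (Quot.mk _ ⟨D₂, hD₂⟩) := by
    rw [image_mk f hD₁ hmap, image_mk f hD₂ (hmap₁₂ ▸ hmap)]
    simp only [hmap₁₂]
  obtain ⟨g, hg⟩ := mk_eq_mk_iff.mp (hinj heq)
  exact hconj g hg

section Prod

variable {H K : Type*} [Group H] [Group K]

lemma card_map_fst_map_conj (C : Subgroup (H × K)) (g : H × K) :
    Nat.card ((C.map (MulAut.conj g).toMonoidHom).map (MonoidHom.fst H K)) =
      Nat.card (C.map (MonoidHom.fst H K)) := by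
  rw [map_map_conj]
  exact card_map_of_injective (MulAut.conj _).injective

lemma coprime_card_map_fst_of_one_mem [Finite H] [Finite K] {D : Subgroup (H × K)}
    (hD : IsCyclic D) {k : K} (hk : ((1 : H), k) ∈ D)
    (hsnd : D.map (MonoidHom.snd H K) = zpowers k) :
    (Nat.card (D.map (MonoidHom.fst H K))).Coprime (orderOf k) := by
  obtain ⟨w, rfl⟩ := D.isCyclic_iff_exists_zpowers_eq_top.mp hD
  obtain ⟨n, hn⟩ := mem_powers_iff_mem_zpowers.mpr hk
  rw [MonoidHom.map_zpowers] at hsnd ⊢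
  have hw₁ : w.1 ^ n = 1 := congrArg Prod.fst hn
  have hw₂ : w.2 ^ n = k := congrArg Prod.snd hn
  have hord : orderOf w.2 = orderOf k := by
    rw [← Nat.card_zpowers, ← Nat.card_zpowers k]
    exact congrArg (fun S : Subgroup K => Nat.card S) hsnd
  rw [Nat.card_zpowers, ← hord]
  exact (Nat.Coprime.of_orderOf_pow_eq (by rw [hw₂, hord])).symm.coprime_dvd_left
    (orderOf_dvd_of_pow_eq_one hw₁)

end Prod

theorem stmt_5_general {H K : Type*} [Group H] [Group K] [Finite H] [Finite K]
    {p : ℕ} (hp : p.Prime) (hpH : p ∣ Nat.card H) (hpK : p ∣ Nat.card K) :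
    eta K < eta (H × K) := by
  have := Fact.mk hp
  obtain ⟨h, hh⟩ := exists_prime_orderOf_dvd_card' p hpH
  obtain ⟨z, hz⟩ := exists_prime_orderOf_dvd_card' p hpK
  obtain ⟨C, hC, hzC⟩ := exists_isMaximalCyclic_mem z
  obtain ⟨k, rfl⟩ := C.isCyclic_iff_exists_zpowers_eq_top.mp hC.1
  have hpk : p ∣ orderOf k := hz ▸ orderOf_dvd_of_mem_zpowers hzC
  have hsnd {D : Subgroup (H × K)} (hD : IsCyclic D) {x : H} (hx : (x, k) ∈ D) :
      D.map (MonoidHom.snd H K) = zpowers k :=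
    (hC.2 _ (isCyclic_map _ hD) (zpowers_le.mpr ⟨_, hx, rfl⟩)).symm
  obtain ⟨D₁, hD₁, h1⟩ := exists_isMaximalCyclic_mem ((1, k) : H × K)
  obtain ⟨D₂, hD₂, h2⟩ := exists_isMaximalCyclic_mem (h, k)
  refine eta_lt_of_surjective (MonoidHom.snd H K) Prod.snd_surjective hD₁ hD₂
    (hsnd hD₁.1 h1 ▸ hC) ((hsnd hD₁.1 h1).trans (hsnd hD₂.1 h2).symm) fun g hg => ?_
  have hcop := coprime_card_map_fst_of_one_mem hD₁.1 h1 (hsnd hD₁.1 h1)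
  have hpD₂ : p ∣ Nat.card (D₂.map (MonoidHom.fst H K)) :=
    hh ▸ orderOf_dvd_natCard _ (mem_map_of_mem _ h2)
  rw [hg, card_map_fst_map_conj] at hpD₂
  exact Nat.not_coprime_of_dvd_of_dvd hp.one_lt hpD₂ hpk hcop

theorem stmt_5 {H K : Type*} [Group H] [Group K] [Finite H] [Finite K]
    (hnil : Group.IsNilpotent H) (hHnt : Nontrivial H)
    {p : ℕ} (hp : p.Prime) (hpH : p ∣ Nat.card H) (hpK : p ∣ Nat.card K) :
    eta K < eta (H × K) :=
  stmt_5_general hp hpH hpK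
end

section
/- Let N be a normal subgroup of a finite group G. Then η(G) is at least the number of G-orbits on the N-conjugacy classes of maximal cyclic subgroups of N. In particular, distinct G-orbit representatives C₁, C₂ of maximal cyclic subgroups of N cannot both be G-conjugate into the same maximal cyclic subgroup of G. -/
lemma Nat.card_quot_le_of_reflects {α β : Type*} {r : α → α → Prop} {s : β → β → Prop}
    [Finite (Quot s)] (f : α → β)
    (hf : ∀ a b, Quot.mk s (f a) = Quot.mk s (f b) → Quot.mk r a = Quot.mk r b) :
    Nat.card (Quot r) ≤ Nat.card (Quot s) := by
  refine Nat.card_le_card_of_injective (fun q => Quot.mk s (f q.out)) fun q₁ q₂ h => ?_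
  simpa only [Quot.out_eq] using hf _ _ h

section Conjugation

variable {G : Type*} [Group G]

lemma Subgroup.map_conj_mul (C : Subgroup G) (a b : G) :
    C.map (MulAut.conj (b * a)).toMonoidHom =
      (C.map (MulAut.conj a).toMonoidHom).map (MulAut.conj b).toMonoidHom := by
  rw [Subgroup.map_map, map_mul]
  rfl

lemma Subgroup.map_conj_one_s8 (C : Subgroup G) : C.map (MulAut.conj (1 : G)).toMonoidHom = C := by
  rw [map_one]
  exact C.map_id

lemma equivalence_conj_subtype (P : Subgroup G → Prop) :
    Equivalence (fun C D : {C : Subgroup G // P C} =>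
      ∃ g : G, D.1 = C.1.map (MulAut.conj g).toMonoidHom) where
  refl C := ⟨1, C.1.map_conj_one_s8.symm⟩
  symm := by
    rintro C D ⟨g, hg⟩
    exact ⟨g⁻¹, by rw [hg, ← Subgroup.map_conj_mul, inv_mul_cancel, Subgroup.map_conj_one_s8]⟩
  trans := by
    rintro C D E ⟨g, hg⟩ ⟨h, hh⟩
    exact ⟨h * g, by rw [hh, hg, Subgroup.map_conj_mul]⟩

lemma quot_mk_conj_eq_iff {P : Subgroup G → Prop} {C D : {C : Subgroup G // P C}} :
    Quot.mk (fun C D : {C : Subgroup G // P C} =>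
        ∃ g : G, D.1 = C.1.map (MulAut.conj g).toMonoidHom) C = Quot.mk _ D ↔
      ∃ g : G, D.1 = C.1.map (MulAut.conj g).toMonoidHom :=
  Quot.eq.trans (equivalence_conj_subtype P).eqvGen_iff

end Conjugation

lemma IsCyclic.exists_isMaximalCyclic_ge {G : Type*} [Group G] [Finite G] {C : Subgroup G}
    (hC : IsCyclic C) : ∃ D : Subgroup G, IsMaximalCyclic D ∧ C ≤ D := by
  obtain ⟨D, ⟨hD, hCD⟩, hmax⟩ :=
    Set.Finite.exists_maximalFor id {D : Subgroup G | IsCyclic D ∧ C ≤ D}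
      (Set.toFinite _) ⟨C, hC, le_rfl⟩
  exact ⟨D, ⟨hD, fun E hE hDE => le_antisymm hDE (hmax ⟨hE, hCD.trans hDE⟩ hDE)⟩, hCD⟩

lemma IsMaximalCyclicIn.eq_inf {G : Type*} [Group G] {N C D : Subgroup G}
    (hC : IsMaximalCyclicIn N C) (hCD : C ≤ D) (hD : IsCyclic D) : C = D ⊓ N :=
  hC.2.2 _ inf_le_right (Subgroup.isCyclic_of_le inf_le_left) (le_inf hCD hC.1)

theorem stmt_8 {G : Type*} [Group G] [Finite G] (N : Subgroup G) [N.Normal] :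
    Nat.card (Quot (fun C D : {C : Subgroup G // IsMaximalCyclicIn N C} =>
      ∃ g : G, D.1 = C.1.map (MulAut.conj g).toMonoidHom)) ≤ eta G := by
  choose D hD hCD using fun C : {C : Subgroup G // IsMaximalCyclicIn N C} =>
    C.2.2.1.exists_isMaximalCyclic_ge
  refine Nat.card_quot_le_of_reflects (fun C => ⟨D C, hD C⟩) fun C₁ C₂ h => ?_
  obtain ⟨g, hg : D C₂ = (D C₁).map _⟩ := quot_mk_conj_eq_iff.mp h
  refine quot_mk_conj_eq_iff.mpr ⟨g, ?_⟩
  rw [C₁.2.eq_inf (hCD C₁) (hD C₁).1, C₂.2.eq_inf (hCD C₂) (hD C₂).1, hg,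
    Subgroup.map_inf _ _ _ (MulAut.conj g).injective]
  exact congrArg _ (Subgroup.Normal.map_conj_eq N g).symm
end

section
/- Let G be a finite group. If G⁻ is a subgroup of G, then every element of G has prime power order. -/
theorem Nat.exists_coprime_mul_eq_of_not_prime_pow {n : ℕ} (hn : n ≠ 0)
    (h : ¬ ∃ q k : ℕ, q.Prime ∧ n = q ^ k) :
    ∃ a b : ℕ, 1 < a ∧ 1 < b ∧ a.Coprime b ∧ a * b = n := by
  induction n using Nat.recOnPosPrimePosCoprime with
  | prime_pow p k hp _ => exact absurd ⟨p, k, hp, rfl⟩ h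
  | zero => exact absurd rfl hn
  | one => exact absurd ⟨2, 0, Nat.prime_two, rfl⟩ h
  | coprime a b ha hb hab _ _ => exact ⟨a, b, ha, hb, hab, rfl⟩

open Subgroup

section

variable {G : Type*} [Group G]

theorem isMaximalCyclic_iff_maximal {C : Subgroup G} :
    IsMaximalCyclic C ↔ Maximal (fun D : Subgroup G => IsCyclic D) C := by
  rw [IsMaximalCyclic, maximal_iff]

theorem zpowers_pow_eq_of_coprime {g : G} {k : ℕ} (hk : (orderOf g).Coprime k) :
    zpowers (g ^ k) = zpowers g :=
  le_antisymm (zpowers_le.2 (pow_mem (mem_zpowers g) k))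
    (zpowers_le.2 (mem_zpowers_pow_iff.2 (Nat.gcd_comm _ _ ▸ hk)))

theorem mem_Gminus_of_orderOf_lt {g x : G} (hx : x ∈ zpowers g) (hlt : orderOf x < orderOf g) :
    x ∈ Gminus G := by
  intro hmax
  have heq : zpowers x = zpowers g := hmax.2 _ inferInstance (zpowers_le.2 hx)
  have := congrArg (fun C : Subgroup G => Nat.card C) heq
  simp only [Nat.card_zpowers] at this
  omega

theorem orderOf_eq_prime_pow_of_isMaximalCyclic
    (hmul : ∀ x ∈ Gminus G, ∀ y ∈ Gminus G, x * y ∈ Gminus G)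
    {g : G} (hg : IsOfFinOrder g) (hmax : IsMaximalCyclic (zpowers g)) :
    ∃ q k : ℕ, q.Prime ∧ orderOf g = q ^ k := by
  by_contra hpow
  obtain ⟨a, b, ha, hb, hab, hN⟩ :=
    Nat.exists_coprime_mul_eq_of_not_prime_pow hg.orderOf_pos.ne' hpow
  have hga : g ^ a ∈ Gminus G := by
    refine mem_Gminus_of_orderOf_lt (pow_mem (mem_zpowers g) a) ?_
    rw [orderOf_pow_of_dvd (by omega) ⟨b, hN.symm⟩, ← hN, Nat.mul_div_cancel_left _ (by omega)]
    nlinarith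
  have hgb : g ^ b ∈ Gminus G := by
    refine mem_Gminus_of_orderOf_lt (pow_mem (mem_zpowers g) b) ?_
    rw [orderOf_pow_of_dvd (by omega) ⟨a, by rw [← hN, mul_comm]⟩, ← hN,
      Nat.mul_div_cancel _ (by omega)]
    nlinarith
  have hcop : (orderOf g).Coprime (a + b) := by
    rw [← hN]
    exact Nat.Coprime.mul_left (by simpa using hab) (by simpa using hab.symm)
  have := hmul _ hga _ hgb
  rw [← pow_add, Gminus, Set.mem_ofPred_eq, zpowers_pow_eq_of_coprime hcop] at this
  exact this hmax

theorem exists_mem_zpowers_isMaximalCyclic [Finite G] (g : G) :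
    ∃ x : G, g ∈ zpowers x ∧ IsMaximalCyclic (zpowers x) := by
  obtain ⟨D, hle, hD⟩ := Finite.exists_le_maximal (p := fun D : Subgroup G => IsCyclic D)
    (isCyclic_zpowers g)
  obtain ⟨x, rfl⟩ := (Subgroup.isCyclic_iff_exists_zpowers_eq_top D).1 hD.prop
  exact ⟨x, hle (mem_zpowers g), isMaximalCyclic_iff_maximal.2 hD⟩

end

theorem stmt_16 {G : Type*} [Group G] [Finite G]
    (h : ∃ H : Subgroup G, (H : Set G) = Gminus G) :
    ∀ g : G, ∃ q n : ℕ, q.Prime ∧ orderOf g = q ^ n := by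
  obtain ⟨H, hH⟩ := h
  have hmul : ∀ x ∈ Gminus G, ∀ y ∈ Gminus G, x * y ∈ Gminus G := by
    rw [← hH]
    exact fun x hx y hy => H.mul_mem hx hy
  intro g
  obtain ⟨x, hgx, hx⟩ := exists_mem_zpowers_isMaximalCyclic g
  obtain ⟨q, k, hq, hxk⟩ :=
    orderOf_eq_prime_pow_of_isMaximalCyclic hmul (isOfFinOrder_of_finite x) hx
  obtain ⟨m, -, hm⟩ := (Nat.dvd_prime_pow hq).1 (hxk ▸ orderOf_dvd_of_mem_zpowers hgx)
  exact ⟨q, m, hq, hm⟩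
end

section
/- For a nontrivial finite group G, η(G) = l(G) − 1 if and only if every nontrivial element of G has prime order, where l(G) is the number of conjugacy classes of cyclic subgroups of G. -/
/-- l(G): the number of conjugacy classes of cyclic subgroups of G. -/
noncomputable def lG (G : Type*) [Group G] : ℕ :=
  Nat.card (Quot (fun C D : {C : Subgroup G // IsCyclic C} =>
    ∃ g : G, D.1 = C.1.map (MulAut.conj g).toMonoidHom))

/-
Conjugation permutes the cyclic subgroups and preserves maximality, so the classes of maximal
cyclic subgroups form a subset of the classes of nontrivial cyclic subgroups, of which there are
l(G) - 1: the trivial subgroup is alone in its class and, G being nontrivial, is not maximal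
cyclic. Hence η(G) = l(G) - 1 says exactly that every nontrivial cyclic subgroup is maximal
cyclic. If every nontrivial element has prime order, then ⟨c⟩ ≤ ⟨d⟩ with c ≠ 1 gives
|c| ∣ |d|, so |c| = |d| and ⟨c⟩ = ⟨d⟩. Conversely, if g has order n and p is a prime divisor
of n, then ⟨g^(n/p)⟩ has order p, is maximal cyclic and lies in ⟨g⟩, so n = p.
-/

theorem Quot.card_subtype_eq_ncard_image {α : Type*} {r : α → α → Prop} (hr : Equivalence r)
    (p : α → Prop) :
    Nat.card (Quot fun a b : {a // p a} => r a b) = (Quot.mk r '' {a | p a}).ncard := by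
  let f : (Quot fun a b : {a // p a} => r a b) → Quot r :=
    Quot.lift (Quot.mk r ·.1) fun _ _ h => Quot.sound h
  have hf : f.Injective := by
    rintro ⟨a⟩ ⟨b⟩ h
    exact Quot.sound (hr.eqvGen_iff.mp (Quot.eq.mp h))
  rw [← Set.ncard_range_of_injective hf, Set.range_quot_lift, Set.image_eq_range]
  rfl

theorem Set.ncard_eq_ncard_sub_one_iff {α : Type*} {A B : Set α} {x : α} (hAB : A ⊆ B \ {x})
    (hx : x ∈ B) (hB : B.Finite := by toFinite_tac) : A.ncard = B.ncard - 1 ↔ A = B \ {x} := by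
  rw [← Set.ncard_sdiff_singleton_of_mem hx]
  exact ⟨fun h => Set.eq_of_subset_of_ncard_le hAB h.ge hB.sdiff, fun h => h ▸ rfl⟩

open Pointwise

namespace Subgroup

variable {G : Type*} [Group G]

def IsConjugate (C D : Subgroup G) : Prop := ∃ g : G, D = MulAut.conj g • C

theorem isConjugate_equivalence : Equivalence (IsConjugate (G := G)) where
  refl C := ⟨1, by simp⟩
  symm := by
    rintro C D ⟨g, rfl⟩
    exact ⟨g⁻¹, by simp [smul_smul]⟩
  trans := by
    rintro C D E ⟨g, rfl⟩ ⟨h, rfl⟩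
    exact ⟨h * g, by simp [smul_smul]⟩

theorem mk_isConjugate_eq_mk_iff {C D : Subgroup G} :
    Quot.mk IsConjugate C = Quot.mk IsConjugate D ↔ IsConjugate C D :=
  Quot.eq.trans isConjugate_equivalence.eqvGen_iff

theorem mk_isConjugate_eq_mk_bot_iff {C : Subgroup G} :
    Quot.mk IsConjugate C = Quot.mk IsConjugate ⊥ ↔ C = ⊥ := by
  rw [mk_isConjugate_eq_mk_iff]
  refine ⟨fun ⟨g, hg⟩ => ?_, fun h => ⟨1, by simp [h]⟩⟩
  rw [← inv_smul_smul (MulAut.conj g) C, ← hg, smul_bot]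

end Subgroup

section MaximalCyclic

variable {G : Type*} [Group G]

open Subgroup

theorem IsMaximalCyclic.smul {α : Type*} [Group α] [MulDistribMulAction α G] {C : Subgroup G}
    (hC : IsMaximalCyclic C) (a : α) : IsMaximalCyclic (a • C) := by
  have smul_cyclic : ∀ (b : α) (D : Subgroup G), IsCyclic D → IsCyclic (b • D : Subgroup G) :=
    fun b D hD => (equivSMul b D).isCyclic.mp hD
  refine ⟨smul_cyclic a C hC.1, fun D hD hle => ?_⟩
  rw [pointwise_smul_subset_iff] at hle
  rw [hC.2 _ (smul_cyclic a⁻¹ D hD) hle, smul_inv_smul]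

theorem not_isMaximalCyclic_bot [Nontrivial G] : ¬ IsMaximalCyclic (⊥ : Subgroup G) := by
  rintro ⟨-, hmax⟩
  obtain ⟨g, hg⟩ := exists_ne (1 : G)
  exact hg (zpowers_eq_bot.mp (hmax _ inferInstance bot_le).symm)

theorem image_isMaximalCyclic_subset [Nontrivial G] :
    Quot.mk IsConjugate '' {C : Subgroup G | IsMaximalCyclic C} ⊆
      Quot.mk IsConjugate '' {C | IsCyclic C} \ {Quot.mk IsConjugate ⊥} := by
  rintro _ ⟨C, hC, rfl⟩
  refine ⟨⟨C, hC.1, rfl⟩, fun hbot => ?_⟩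
  rw [Set.mem_singleton_iff, mk_isConjugate_eq_mk_bot_iff] at hbot
  exact not_isMaximalCyclic_bot (hbot ▸ hC)

theorem image_isMaximalCyclic_eq_iff [Nontrivial G] :
    Quot.mk IsConjugate '' {C : Subgroup G | IsMaximalCyclic C} =
        Quot.mk IsConjugate '' {C | IsCyclic C} \ {Quot.mk IsConjugate ⊥} ↔
      ∀ C : Subgroup G, IsCyclic C → C ≠ ⊥ → IsMaximalCyclic C := by
  refine ⟨fun heq C hC hne => ?_, fun h => image_isMaximalCyclic_subset.antisymm ?_⟩
  · obtain ⟨D, hD, hDC⟩ :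
        Quot.mk IsConjugate C ∈ Quot.mk IsConjugate '' {C | IsMaximalCyclic C} :=
      heq ▸ ⟨⟨C, hC, rfl⟩, fun hbot => hne (mk_isConjugate_eq_mk_bot_iff.mp hbot)⟩
    obtain ⟨g, rfl⟩ := mk_isConjugate_eq_mk_iff.mp hDC
    exact hD.smul _
  · rintro _ ⟨⟨C, hC, rfl⟩, hbot⟩
    exact ⟨C, h C hC fun hCbot => hbot (congrArg (Quot.mk _) hCbot), rfl⟩

theorem isMaximalCyclic_of_forall_orderOf_prime (hp : ∀ g : G, g ≠ 1 → (orderOf g).Prime)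
    {C : Subgroup G} (hC : IsCyclic C) (hne : C ≠ ⊥) : IsMaximalCyclic C := by
  refine ⟨hC, fun D hD hle => ?_⟩
  obtain ⟨c, rfl⟩ := (C.isCyclic_iff_exists_zpowers_eq_top).mp hC
  obtain ⟨d, rfl⟩ := (D.isCyclic_iff_exists_zpowers_eq_top).mp hD
  have hc : c ≠ 1 := mt zpowers_eq_bot.mpr hne
  have hd : d ≠ 1 := by
    rintro rfl
    exact hne (le_bot_iff.mp (zpowers_one_eq_bot (G := G) ▸ hle))
  have hord : orderOf c = orderOf d := (Nat.prime_dvd_prime_iff_eq (hp c hc) (hp d hd)).mp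
    (orderOf_dvd_of_mem_zpowers (zpowers_le.mp hle))
  have : Finite (zpowers d) :=
    Nat.finite_of_card_ne_zero (Nat.card_zpowers d ▸ (hp d hd).ne_zero)
  exact eq_of_le_of_card_ge hle (by rw [Nat.card_zpowers, Nat.card_zpowers, hord])

theorem orderOf_prime_of_forall_isMaximalCyclic
    (hmax : ∀ C : Subgroup G, IsCyclic C → C ≠ ⊥ → IsMaximalCyclic C) {g : G}
    (hfin : IsOfFinOrder g) (hg : g ≠ 1) : (orderOf g).Prime := by
  have hg1 : orderOf g ≠ 1 := by rwa [Ne, orderOf_eq_one_iff]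
  set p := (orderOf g).minFac
  have hp : p.Prime := Nat.minFac_prime hg1
  have hord : orderOf (g ^ (orderOf g / p)) = p :=
    orderOf_pow_orderOf_div hfin.orderOf_pos.ne' (Nat.minFac_dvd _)
  have hne : zpowers (g ^ (orderOf g / p)) ≠ ⊥ := by
    rw [Ne, zpowers_eq_bot, ← orderOf_eq_one_iff, hord]
    exact hp.ne_one
  have heq := (hmax _ inferInstance hne).2 (zpowers g) inferInstance
    (zpowers_le.mpr (pow_mem (mem_zpowers g) _))
  rwa [← Nat.card_zpowers, ← heq, Nat.card_zpowers, hord]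

end MaximalCyclic

theorem stmt_17 {G : Type*} [Group G] [Finite G] (hnt : Nontrivial G) :
    eta G = lG G - 1 ↔ ∀ g : G, g ≠ 1 → (orderOf g).Prime := by
  have hη :
      eta G = (Quot.mk Subgroup.IsConjugate '' {C : Subgroup G | IsMaximalCyclic C}).ncard :=
    Quot.card_subtype_eq_ncard_image Subgroup.isConjugate_equivalence _
  have hl : lG G = (Quot.mk Subgroup.IsConjugate '' {C : Subgroup G | IsCyclic C}).ncard :=
    Quot.card_subtype_eq_ncard_image Subgroup.isConjugate_equivalence _
  rw [hη, hl, Set.ncard_eq_ncard_sub_one_iff image_isMaximalCyclic_subset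
    ⟨⊥, Bot.isCyclic, rfl⟩, image_isMaximalCyclic_eq_iff]
  exact ⟨fun hmax g => orderOf_prime_of_forall_isMaximalCyclic hmax (isOfFinOrder_of_finite g),
    fun hp _ => isMaximalCyclic_of_forall_orderOf_prime hp⟩
end
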